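/- The direct product monoid A^1 × B^1 does not satisfy the identity x·y²·t·x ≈ x·y²·x·t·x: the first coordinate A^1 fails it with x = e, y = d, t = b. -/

import Mathlib

/-- The semigroup A = {0,a,b,c,d,e}. -/
inductive Asg | z | a | b | c | d | e
deriving DecidableEq

instance : Fintype Asg :=
  ⟨⟨↑[Asg.z, Asg.a, Asg.b, Asg.c, Asg.d, Asg.e], by decide⟩, by intro x; cases x <;> decide⟩

namespace Asg
def mul : Asg → Asg → Asg
  | .a, .e => .a
  | .b, .e => .b
  | .c, .b => .a
  | .c, .d => .c
  | .d, .b => .b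
  | .d, .d => .d
  | .e, .a => .a
  | .e, .b => .a
  | .e, .c => .c
  | .e, .d => .c
  | .e, .e => .e
  | _, _ => .z
end Asg

/-- The monoid A¹ obtained by adjoining an identity to A. -/
inductive A1 | z | a | b | c | d | e | one
deriving DecidableEq

instance : Fintype A1 :=
  ⟨⟨↑[A1.z, A1.a, A1.b, A1.c, A1.d, A1.e, A1.one], by decide⟩, by intro x; cases x <;> decide⟩

namespace A1
def mul : A1 → A1 → A1
  | .one, x => x
  | x, .one => x
  | .a, .e => .a
  | .b, .e => .b
  | .c, .b => .a
  | .c, .d => .c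
  | .d, .b => .b
  | .d, .d => .d
  | .e, .a => .a
  | .e, .b => .a
  | .e, .c => .c
  | .e, .d => .c
  | .e, .e => .e
  | _, _ => .z

instance : Mul A1 := ⟨A1.mul⟩
instance : One A1 := ⟨A1.one⟩

instance : Monoid A1 where
  mul_assoc := by decide
  one_mul := by decide
  mul_one := by decide
end A1

def SatisfiesXY2TX (M : Type*) [Monoid M] : Prop :=
  ∀ x y t : M, x * y ^ 2 * t * x = x * y ^ 2 * x * t * x

theorem SatisfiesXY2TX.of_surjective {M N : Type*} [Monoid M] [Monoid N] (f : M →* N)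
    (hf : Function.Surjective f) (hM : SatisfiesXY2TX M) : SatisfiesXY2TX N := by
  intro x y t
  obtain ⟨x, rfl⟩ := hf x
  obtain ⟨y, rfl⟩ := hf y
  obtain ⟨t, rfl⟩ := hf t
  simpa only [map_mul, map_pow] using congrArg f (hM x y t)

theorem SatisfiesXY2TX.fst {M N : Type*} [Monoid M] [Monoid N] (h : SatisfiesXY2TX (M × N)) :
    SatisfiesXY2TX M :=
  h.of_surjective (MonoidHom.fst M N) Prod.fst_surjective

-- `e d² b e = a`, whereas `e d² e b e = 0` because `c e = 0`.
theorem A1.not_satisfiesXY2TX : ¬ SatisfiesXY2TX A1 := fun h =>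
  absurd (h .e .d .b) (by decide)

/-- A¹ × B¹ does not satisfy the identity xy²tx ≈ xy²xtx. -/
theorem prod_fails_xy2tx :
    ¬ ∀ x y t : A1 × A1ᵐᵒᵖ, x * y ^ 2 * t * x = x * y ^ 2 * x * t * x :=
  fun h => A1.not_satisfiesXY2TX (SatisfiesXY2TX.fst h)
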